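/- For every z>0 one has |θ(z) − π(z − 1/4)| < π/2. -/

import Mathlib

/-!
Put `a = π (z - 1/4)`. By the reflection formula, `π` times the inner product of
`(√z / Γ(3/4 - z), -1 / Γ(1/4 - z))` with `(cos a, sin a)` is
`√z Γ(1/4 + z) cos² a + Γ(3/4 + z) sin² a > 0`, so `cos (θ z - a) > 0` for every `z ≥ 0`.
The continuous function `θ z - a` equals `-π/4` at `z = 0` and never meets a zero of `cos`,
so by the intermediate value theorem it stays in `(-π/2, π/2)`.
-/

open Real Set

/-- At the poles of `Γ s` both sides vanish, since `sin (π * s) = 0` there. -/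
lemma Real.inv_Gamma_eq_Gamma_one_sub_mul_sin_div {s : ℝ} (h : Gamma (1 - s) ≠ 0) :
    (Gamma s)⁻¹ = Gamma (1 - s) * sin (π * s) / π := by
  have hrefl := Gamma_mul_Gamma_one_sub s
  rcases eq_or_ne (sin (π * s)) 0 with hsin | hsin
  · rw [hsin, div_zero, mul_eq_zero] at hrefl
    rw [hrefl.resolve_right h, hsin, inv_zero, mul_zero, zero_div]
  · rw [inv_eq_iff_eq_inv, inv_div, eq_div_iff (mul_ne_zero h hsin), ← mul_assoc,
      ← eq_div_iff hsin, hrefl]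

lemma mul_cos_sq_add_mul_sin_sq_pos {p q : ℝ} (hp : 0 < p) (hq : 0 < q) (x : ℝ) :
    0 < p * cos x ^ 2 + q * sin x ^ 2 := by
  rcases le_total p q with hpq | hqp
  · nlinarith [sin_sq_add_cos_sq x, mul_nonneg (sub_nonneg.mpr hpq) (sq_nonneg (sin x))]
  · nlinarith [sin_sq_add_cos_sq x, mul_nonneg (sub_nonneg.mpr hqp) (sq_nonneg (cos x))]

lemma sqrt_mul_inv_Gamma_mul_cos_sub_inv_Gamma_mul_sin_pos {z : ℝ} (hz : 0 < z) :
    0 < √z * (Gamma (3/4 - z))⁻¹ * cos (π * (z - 1/4))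
      + -(Gamma (1/4 - z))⁻¹ * sin (π * (z - 1/4)) := by
  set a := π * (z - 1/4)
  have hΓ₁ : 0 < Gamma (1/4 + z) := Gamma_pos_of_pos (by linarith)
  have hΓ₃ : 0 < Gamma (3/4 + z) := Gamma_pos_of_pos (by linarith)
  have e₃ : 1 - (3/4 - z) = 1/4 + z := by ring
  have e₁ : 1 - (1/4 - z) = 3/4 + z := by ring
  have h₃ : (Gamma (3/4 - z))⁻¹ = Gamma (1/4 + z) * cos a / π := by
    rw [inv_Gamma_eq_Gamma_one_sub_mul_sin_div (s := 3/4 - z) (by rw [e₃]; exact hΓ₁.ne'), e₃,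
      show π * (3/4 - z) = π / 2 - a by ring, sin_pi_div_two_sub]
  have h₁ : (Gamma (1/4 - z))⁻¹ = -(Gamma (3/4 + z) * sin a / π) := by
    rw [inv_Gamma_eq_Gamma_one_sub_mul_sin_div (s := 1/4 - z) (by rw [e₁]; exact hΓ₃.ne'), e₁,
      show π * (1/4 - z) = -a by ring, sin_neg]
    ring
  have hsum := mul_cos_sq_add_mul_sin_sq_pos (mul_pos (sqrt_pos.mpr hz) hΓ₁) hΓ₃ a
  rw [h₃, h₁]
  exact (div_pos hsum pi_pos).trans_eq (by ring)

lemma cos_sub_pos_of_mul_cos_mul_cos_add_pos {r θ a : ℝ} (hr : 0 < r)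
    (h : 0 < r * cos θ * cos a + r * sin θ * sin a) : 0 < cos (θ - a) := by
  have : r * cos (θ - a) = r * cos θ * cos a + r * sin θ * sin a := by rw [cos_sub]; ring
  exact pos_of_mul_pos_right (this ▸ h) hr.le

lemma abs_lt_pi_div_two_of_cos_pos {X : Type*} [TopologicalSpace X] {s : Set X} {g : X → ℝ}
    (hs : IsPreconnected s) (hg : ContinuousOn g s) (hcos : ∀ w ∈ s, 0 < cos (g w))
    {x y : X} (hx : x ∈ s) (hy : y ∈ s) (hgx : |g x| < π / 2) : |g y| < π / 2 := by
  have no_root : ∀ c, cos c = 0 → c ∉ g '' s := by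
    rintro c hc ⟨w, hw, rfl⟩
    exact (hcos w hw).ne' hc
  rw [abs_lt] at hgx ⊢
  constructor
  · by_contra! hle
    exact no_root _ (cos_neg (π / 2) ▸ cos_pi_div_two)
      (hs.intermediate_value hy hx hg ⟨hle, hgx.1.le⟩)
  · by_contra! hle
    exact no_root _ cos_pi_div_two (hs.intermediate_value hx hy hg ⟨hgx.2.le, hle⟩)

theorem stmt10
    (θ : ℝ → ℝ)
    (hθc : ContinuousOn θ (Ici 0)) (hθ0 : θ 0 = -(π/2))
    (hθ : ∀ z ≥ (0:ℝ), ∃ r > (0:ℝ),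
      r * Real.cos (θ z) = Real.sqrt z * (Real.Gamma (3/4 - z))⁻¹ ∧
      r * Real.sin (θ z) = -(Real.Gamma (1/4 - z))⁻¹) :
    ∀ z : ℝ, 0 < z → |θ z - π * (z - 1/4)| < π/2 := by
  have hθ0' : θ 0 - π * (0 - 1/4) = -(π / 4) := by rw [hθ0]; ring
  have hcos : ∀ w ∈ Ici (0:ℝ), 0 < cos (θ w - π * (w - 1/4)) := by
    intro w hw
    rcases (mem_Ici.mp hw).eq_or_lt with rfl | hw
    · rw [hθ0', cos_neg, cos_pi_div_four]
      positivity
    · obtain ⟨r, hr, hx, hy⟩ := hθ w hw.le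
      refine cos_sub_pos_of_mul_cos_mul_cos_add_pos hr ?_
      rw [hx, hy]
      exact sqrt_mul_inv_Gamma_mul_cos_sub_inv_Gamma_mul_sin_pos hw
  intro z hz
  refine abs_lt_pi_div_two_of_cos_pos (g := fun w ↦ θ w - π * (w - 1/4)) isPreconnected_Ici
    (hθc.sub (by fun_prop)) hcos self_mem_Ici hz.le ?_
  rw [hθ0', abs_neg, abs_of_pos (by positivity)]
  linarith [pi_pos]
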